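/- arXiv:2402.16227 — 2 statements merged into one kernel-verified Lean document; each statement's English description precedes it below -/
import Mathlib

section
/- Let S be a symmetric positive definite real n̄×n̄ matrix, τ > 0, Γ ∈ ℝ^{n_ζ×n̄}, and let B ∈ ℝ^{m×n_ζ} with rows b₁ᵀ, …, b_mᵀ. Then for every ζ ∈ U = { Γz : zᵀSz ≤ τ }, the Euclidean norm satisfies ‖Bζ‖₂ ≤ √( Σ_{m̄=1}^{m} τ · ‖Γᵀb_{m̄}‖²_{S⁻¹} ). -/
/-! Each coordinate of `Bζ` with `ζ = Γz` is `⟪Γᵀbᵢ, z⟫`. Writing `Γᵀbᵢ = S(S⁻¹Γᵀbᵢ)` and applying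
Cauchy–Schwarz for the inner product `xᵀSy` bounds its square by `‖Γᵀbᵢ‖²_{S⁻¹} · zᵀSz ≤ τ ‖Γᵀbᵢ‖²_{S⁻¹}`;
summing over the rows gives the claim. -/

open Matrix

theorem Matrix.PosSemidef.dotProduct_mulVec_sq_le {n : Type*} [Fintype n] {M : Matrix n n ℝ}
    (hM : M.PosSemidef) (x y : n → ℝ) :
    (x ⬝ᵥ M *ᵥ y) ^ 2 ≤ (x ⬝ᵥ M *ᵥ x) * (y ⬝ᵥ M *ᵥ y) := by
  let := M.toSeminormedAddCommGroup hM
  let := M.toInnerProductSpace hM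
  have hinner : ∀ u w : n → ℝ, inner ℝ u w = u ⬝ᵥ M *ᵥ w := fun u w => by
    rw [dotProduct_comm]; rfl
  simpa only [hinner, sq] using real_inner_mul_inner_self_le x y

theorem Matrix.PosDef.dotProduct_sq_le {n : Type*} [Fintype n] [DecidableEq n]
    {S : Matrix n n ℝ} (hS : S.PosDef) (v z : n → ℝ) :
    (v ⬝ᵥ z) ^ 2 ≤ (v ⬝ᵥ S⁻¹ *ᵥ v) * (z ⬝ᵥ S *ᵥ z) := by
  set x := S⁻¹ *ᵥ v
  have hSx : S *ᵥ x = v := by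
    rw [mulVec_mulVec, mul_nonsing_inv S (isUnit_iff_ne_zero.mpr hS.det_pos.ne'), one_mulVec]
  have hSsymm : Sᵀ = S := (isHermitian_iff_isSymm.mp hS.isHermitian).eq
  have hvz : v ⬝ᵥ z = x ⬝ᵥ S *ᵥ z := by
    rw [← hSx, dotProduct_mulVec, ← mulVec_transpose, hSsymm]
  have hvv : v ⬝ᵥ x = x ⬝ᵥ S *ᵥ x := by rw [hSx, dotProduct_comm]
  rw [hvz, hvv]
  exact hS.posSemidef.dotProduct_mulVec_sq_le x z

theorem stmt_6_general {nζ nbar m : ℕ}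
    (S : Matrix (Fin nbar) (Fin nbar) ℝ) (hS : S.PosDef)
    (τ : ℝ)
    (Γ : Matrix (Fin nζ) (Fin nbar) ℝ) (B : Matrix (Fin m) (Fin nζ) ℝ) :
    ∀ z : Fin nbar → ℝ, z ⬝ᵥ S.mulVec z ≤ τ →
      Real.sqrt (∑ i, (B.mulVec (Γ.mulVec z) i) ^ 2) ≤
        Real.sqrt (∑ mb, τ *
          (Real.sqrt ((Γᵀ.mulVec (B mb)) ⬝ᵥ S⁻¹.mulVec (Γᵀ.mulVec (B mb)))) ^ 2) := by
  intro z hz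
  refine Real.sqrt_le_sqrt (Finset.sum_le_sum fun i _ => ?_)
  set v := Γᵀ *ᵥ B i
  have hv : 0 ≤ v ⬝ᵥ S⁻¹ *ᵥ v := hS.inv.posSemidef.re_dotProduct_nonneg v
  have hrow : (B *ᵥ (Γ *ᵥ z)) i = v ⬝ᵥ z := by
    simp only [v, mulVec_mulVec, mulVec_transpose]; rfl
  rw [Real.sq_sqrt hv, hrow]
  calc (v ⬝ᵥ z) ^ 2 ≤ (v ⬝ᵥ S⁻¹ *ᵥ v) * (z ⬝ᵥ S *ᵥ z) := hS.dotProduct_sq_le v z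
    _ ≤ (v ⬝ᵥ S⁻¹ *ᵥ v) * τ := by gcongr
    _ = τ * (v ⬝ᵥ S⁻¹ *ᵥ v) := mul_comm _ _

/-- For every `ζ ∈ U = { Γz : zᵀSz ≤ τ }`, the Euclidean norm of `Bζ` is bounded
by `√( Σ_{m̄} τ·‖Γᵀb_{m̄}‖²_{S⁻¹} )`, where `b_{m̄}ᵀ` are the rows of `B`. -/
theorem stmt_6 {nζ nbar m : ℕ}
    (S : Matrix (Fin nbar) (Fin nbar) ℝ) (hS : S.PosDef)
    (τ : ℝ) (hτ : 0 < τ)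
    (Γ : Matrix (Fin nζ) (Fin nbar) ℝ) (B : Matrix (Fin m) (Fin nζ) ℝ) :
    ∀ z : Fin nbar → ℝ, z ⬝ᵥ S.mulVec z ≤ τ →
      Real.sqrt (∑ i, (B.mulVec (Γ.mulVec z) i) ^ 2) ≤
        Real.sqrt (∑ mb, τ *
          (Real.sqrt ((Γᵀ.mulVec (B mb)) ⬝ᵥ S⁻¹.mulVec (Γᵀ.mulVec (B mb)))) ^ 2) :=
  stmt_6_general S hS τ Γ B
end

section
/- Let Sᵢ, Sⱼ be symmetric positive definite matrices, τᵢ, τⱼ > 0, Γᵢ, Γⱼ, Mᵢ, Mⱼ matrices of compatible sizes, Hᵢ ∈ ℝ^{m×n_{xᵢ}}, Hⱼ ∈ ℝ^{m×n_{xⱼ}} with rows hᵢ,₁ᵀ,…,hᵢ,ₘᵀ and hⱼ,₁ᵀ,…,hⱼ,ₘᵀ, μᵢ ∈ ℝ^{n_{xᵢ}}, μⱼ ∈ ℝ^{n_{xⱼ}}, μ_d^i, μ_d^j ∈ ℝ^m, and reals c̃, c ≥ 0. Suppose: (i) ‖Hᵢμᵢ − Hⱼμⱼ‖₂ ≥ c̃;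 (ii) ‖μ_d^i + μ_d^j‖₂ ≤ c̃ − c; (iii) (μ_d^i)_{m̄} ≥ √τᵢ·‖ΓᵢᵀMᵢᵀhᵢ,_{m̄}‖_{Sᵢ⁻¹} and (μ_d^j)_{m̄} ≥ √τⱼ·‖ΓⱼᵀMⱼᵀhⱼ,_{m̄}‖_{Sⱼ⁻¹} for every m̄ = 1,…,m. Then the robust inter-agent constraint holds: ‖Hᵢ(μᵢ + Mᵢζᵢ) − Hⱼ(μⱼ + Mⱼζⱼ)‖₂ ≥ c for all ζᵢ ∈ Uᵢ = { Γᵢz : zᵀSᵢz ≤ τᵢ } and ζⱼ ∈ Uⱼ = { Γⱼz : zᵀSⱼz ≤ τⱼ }. -/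
/-!
Each disturbance enters a row of the constraint as `h ⬝ᵥ M (Γ z) = (Γᵀ Mᵀ h) ⬝ᵥ z`, and
Cauchy–Schwarz in the inner product given by `S` bounds this by
`√τ ‖Γᵀ Mᵀ h‖_{S⁻¹} ≤ μ_d` on the ellipsoid `zᵀ S z ≤ τ`. Hence the disturbance
vector `w` is dominated componentwise by `μ_d^i + μ_d^j`, so `‖w‖₂ ≤ c̃ - c`, and the
reverse triangle inequality gives `‖u + w‖₂ ≥ ‖u‖₂ - ‖w‖₂ ≥ c` for the nominal difference `u`.
-/

open Matrix

section CauchySchwarz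

variable {n : Type*} [Fintype n] [DecidableEq n] {S : Matrix n n ℝ}

theorem Matrix.PosSemidef.dotProduct_mulVec_sq_le_s11 (hS : S.PosSemidef) (x y : n → ℝ) :
    (x ⬝ᵥ S *ᵥ y) ^ 2 ≤ (x ⬝ᵥ S *ᵥ x) * (y ⬝ᵥ S *ᵥ y) := by
  have hST : Sᵀ = S := hS.isHermitian.eq
  have hsymm : y ⬝ᵥ S *ᵥ x = x ⬝ᵥ S *ᵥ y := by
    rw [dotProduct_mulVec, ← mulVec_transpose, hST, dotProduct_comm]
  have := (toBilin' S).apply_mul_apply_le_of_forall_zero_le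
    (fun x ↦ by simpa [toBilin'_apply'] using hS.dotProduct_mulVec_nonneg x) x y
  simpa only [toBilin'_apply', hsymm, ← sq] using this

theorem Matrix.PosDef.abs_dotProduct_le (hS : S.PosDef) (v z : n → ℝ) :
    |v ⬝ᵥ z| ≤ √(v ⬝ᵥ S⁻¹ *ᵥ v) * √(z ⬝ᵥ S *ᵥ z) := by
  have hSSinv : S * S⁻¹ = 1 := mul_nonsing_inv S (isUnit_iff_ne_zero.mpr hS.det_pos.ne')
  have hcs := hS.posSemidef.dotProduct_mulVec_sq_le_s11 z (S⁻¹ *ᵥ v)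
  rw [mulVec_mulVec, hSSinv, one_mulVec, dotProduct_comm (S⁻¹ *ᵥ v)] at hcs
  rw [← Real.sqrt_mul' _ (by simpa using hS.posSemidef.dotProduct_mulVec_nonneg z),
    dotProduct_comm v]
  exact Real.abs_le_sqrt (by linarith)

end CauchySchwarz

theorem Matrix.PosDef.abs_dotProduct_mulVec_mulVec_le {n ι κ : Type*} [Fintype n] [DecidableEq n]
    [Fintype ι] [Fintype κ] {S : Matrix n n ℝ} (hS : S.PosDef) {τ : ℝ}
    (Γ : Matrix κ n ℝ) (M : Matrix ι κ ℝ) (h : ι → ℝ) {z : n → ℝ} (hz : z ⬝ᵥ S *ᵥ z ≤ τ) :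
    |h ⬝ᵥ M *ᵥ Γ *ᵥ z| ≤ √τ * √(Γᵀ *ᵥ Mᵀ *ᵥ h ⬝ᵥ S⁻¹ *ᵥ Γᵀ *ᵥ Mᵀ *ᵥ h) := by
  have hdual : h ⬝ᵥ M *ᵥ Γ *ᵥ z = Γᵀ *ᵥ Mᵀ *ᵥ h ⬝ᵥ z := by
    simp only [dotProduct_mulVec, mulVec_transpose]
  rw [hdual, mul_comm √τ]
  exact (hS.abs_dotProduct_le _ z).trans (by gcongr)

theorem sqrt_sum_sq_eq_norm {ι : Type*} [Fintype ι] (x : ι → ℝ) :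
    √(∑ i, x i ^ 2) = ‖WithLp.toLp 2 x‖ := by
  simp only [EuclideanSpace.norm_eq, Real.norm_eq_abs, sq_abs]

theorem le_sqrt_sum_add_sq {ι : Type*} [Fintype ι] {u w d : ι → ℝ} {a c : ℝ}
    (hu : a ≤ √(∑ i, u i ^ 2)) (hwd : ∀ i, |w i| ≤ d i) (hd : √(∑ i, d i ^ 2) ≤ a - c) :
    c ≤ √(∑ i, (u i + w i) ^ 2) := by
  have hw : √(∑ i, w i ^ 2) ≤ √(∑ i, d i ^ 2) :=
    Real.sqrt_le_sqrt <| Finset.sum_le_sum fun i _ ↦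
      sq_le_sq.mpr ((hwd i).trans (le_abs_self _))
  have htri := norm_le_add_norm_add (WithLp.toLp 2 u) (WithLp.toLp 2 w)
  rw [← WithLp.toLp_add] at htri
  simp only [← sqrt_sum_sq_eq_norm, Pi.add_apply] at htri
  linarith

theorem stmt_11_general {nζi nbari nxi nζj nbarj nxj m : ℕ}
    (Si : Matrix (Fin nbari) (Fin nbari) ℝ) (hSi : Si.PosDef)
    (Sj : Matrix (Fin nbarj) (Fin nbarj) ℝ) (hSj : Sj.PosDef)
    (τi τj : ℝ)
    (Γi : Matrix (Fin nζi) (Fin nbari) ℝ) (Γj : Matrix (Fin nζj) (Fin nbarj) ℝ)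
    (Mi : Matrix (Fin nxi) (Fin nζi) ℝ) (Mj : Matrix (Fin nxj) (Fin nζj) ℝ)
    (Hi : Matrix (Fin m) (Fin nxi) ℝ) (Hj : Matrix (Fin m) (Fin nxj) ℝ)
    (μi : Fin nxi → ℝ) (μj : Fin nxj → ℝ)
    (μdi μdj : Fin m → ℝ) (ctilde c : ℝ)
    (h1 : Real.sqrt (∑ i, (Hi.mulVec μi i - Hj.mulVec μj i) ^ 2) ≥ ctilde)
    (h2 : Real.sqrt (∑ mb, (μdi mb + μdj mb) ^ 2) ≤ ctilde - c)
    (hμdi : ∀ mb : Fin m,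
      Real.sqrt τi * Real.sqrt ((Γiᵀ.mulVec (Miᵀ.mulVec (Hi mb))) ⬝ᵥ
        Si⁻¹.mulVec (Γiᵀ.mulVec (Miᵀ.mulVec (Hi mb)))) ≤ μdi mb)
    (hμdj : ∀ mb : Fin m,
      Real.sqrt τj * Real.sqrt ((Γjᵀ.mulVec (Mjᵀ.mulVec (Hj mb))) ⬝ᵥ
        Sj⁻¹.mulVec (Γjᵀ.mulVec (Mjᵀ.mulVec (Hj mb)))) ≤ μdj mb) :
    ∀ zi : Fin nbari → ℝ, zi ⬝ᵥ Si.mulVec zi ≤ τi →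
      ∀ zj : Fin nbarj → ℝ, zj ⬝ᵥ Sj.mulVec zj ≤ τj →
        Real.sqrt (∑ i, (Hi.mulVec (μi + Mi.mulVec (Γi.mulVec zi)) i -
            Hj.mulVec (μj + Mj.mulVec (Γj.mulVec zj)) i) ^ 2) ≥ c := by
  intro zi hzi zj hzj
  have hw : ∀ mb, |(Hi *ᵥ Mi *ᵥ Γi *ᵥ zi) mb - (Hj *ᵥ Mj *ᵥ Γj *ᵥ zj) mb| ≤ μdi mb + μdj mb :=
    fun mb ↦ (abs_sub _ _).trans <| add_le_add
      ((hSi.abs_dotProduct_mulVec_mulVec_le Γi Mi (Hi mb) hzi).trans (hμdi mb))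
      ((hSj.abs_dotProduct_mulVec_mulVec_le Γj Mj (Hj mb) hzj).trans (hμdj mb))
  convert le_sqrt_sum_add_sq h1 hw h2 using 4 with mb
  simp only [mulVec_add, Pi.add_apply]
  ring

/-- The SOCP reformulation implies the robust inter-agent constraint:
`‖Hᵢ(μᵢ + Mᵢζᵢ) − Hⱼ(μⱼ + Mⱼζⱼ)‖₂ ≥ c` for all `ζᵢ ∈ Uᵢ`, `ζⱼ ∈ Uⱼ`. -/
theorem stmt_11 {nζi nbari nxi nζj nbarj nxj m : ℕ}
    (Si : Matrix (Fin nbari) (Fin nbari) ℝ) (hSi : Si.PosDef)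
    (Sj : Matrix (Fin nbarj) (Fin nbarj) ℝ) (hSj : Sj.PosDef)
    (τi τj : ℝ) (hτi : 0 < τi) (hτj : 0 < τj)
    (Γi : Matrix (Fin nζi) (Fin nbari) ℝ) (Γj : Matrix (Fin nζj) (Fin nbarj) ℝ)
    (Mi : Matrix (Fin nxi) (Fin nζi) ℝ) (Mj : Matrix (Fin nxj) (Fin nζj) ℝ)
    (Hi : Matrix (Fin m) (Fin nxi) ℝ) (Hj : Matrix (Fin m) (Fin nxj) ℝ)
    (μi : Fin nxi → ℝ) (μj : Fin nxj → ℝ)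
    (μdi μdj : Fin m → ℝ) (ctilde c : ℝ) (hctilde : 0 ≤ ctilde) (hc : 0 ≤ c)
    (h1 : Real.sqrt (∑ i, (Hi.mulVec μi i - Hj.mulVec μj i) ^ 2) ≥ ctilde)
    (h2 : Real.sqrt (∑ mb, (μdi mb + μdj mb) ^ 2) ≤ ctilde - c)
    (hμdi : ∀ mb : Fin m,
      Real.sqrt τi * Real.sqrt ((Γiᵀ.mulVec (Miᵀ.mulVec (Hi mb))) ⬝ᵥ
        Si⁻¹.mulVec (Γiᵀ.mulVec (Miᵀ.mulVec (Hi mb)))) ≤ μdi mb)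
    (hμdj : ∀ mb : Fin m,
      Real.sqrt τj * Real.sqrt ((Γjᵀ.mulVec (Mjᵀ.mulVec (Hj mb))) ⬝ᵥ
        Sj⁻¹.mulVec (Γjᵀ.mulVec (Mjᵀ.mulVec (Hj mb)))) ≤ μdj mb) :
    ∀ zi : Fin nbari → ℝ, zi ⬝ᵥ Si.mulVec zi ≤ τi →
      ∀ zj : Fin nbarj → ℝ, zj ⬝ᵥ Sj.mulVec zj ≤ τj →
        Real.sqrt (∑ i, (Hi.mulVec (μi + Mi.mulVec (Γi.mulVec zi)) i -
            Hj.mulVec (μj + Mj.mulVec (Γj.mulVec zj)) i) ^ 2) ≥ c :=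
  stmt_11_general Si hSi Sj hSj τi τj Γi Γj Mi Mj Hi Hj μi μj μdi μdj ctilde c h1 h2 hμdi hμdj
end
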